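/- Let v ∈ V, let i ∈ win⁻_v, let x = next_v(i), and let F : V → ℝ be an arbitrary function. Then cost_F(v,i) − cost_F(x,i) = cost_F(v,x) − cost_F(x,x). (All four quantities are well-defined: x ∈ win*_v, x ∈ win*_x, and i ∈ win⁻_x with next_x(i) = x.) -/

import Mathlib

open Finset
open scoped Classical

noncomputable section

variable {V : Type} [Fintype V] [PartialOrder V]

/-- The chain `T[v,i]` : all vertices `p` with `v ≤ p ≤ i`. -/
def chainCC (v i : V) : Finset V := univ.filter (fun p => v ≤ p ∧ p ≤ i)

/-- The chain `T[v,i)` : `T[v,i]` without `i`. -/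
def chainCO (v i : V) : Finset V := (chainCC v i).erase i

/-- `p` is the parent of `j`. -/
def IsParent (p j : V) : Prop := p < j ∧ ¬ ∃ q, p < q ∧ q < j

/-- `u` is s-maximal in `T_v`. -/
def SMax (s : V → ℝ) (v u : V) : Prop := v ≤ u ∧ ∀ p ∈ chainCO v u, s p < s u

/-- The window of `v`. -/
def win (w : V → ℝ) (w0 : ℝ) (v : V) : Finset V :=
  univ.filter (fun i => v ≤ i ∧ ∑ j ∈ chainCC v i, w j ≤ w0)

/-- `win*_v`: the s-maximal vertices of the window of `v`. -/
def winStar (w : V → ℝ) (w0 : ℝ) (s : V → ℝ) (v : V) : Finset V :=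
  (win w w0 v).filter (fun i => SMax s v i)

/-- `win⁻_v = win_v \ win*_v`. -/
def winMinus (w : V → ℝ) (w0 : ℝ) (s : V → ℝ) (v : V) : Finset V :=
  win w w0 v \ winStar w w0 s v

/-- `next_v(u)`: the greatest (closest to `u`) s-maximal element of `T[v,u)`,
if such a greatest element exists (junk value `v` otherwise). -/
def nxt (s : V → ℝ) (v u : V) : V :=
  if h : ∃ x ∈ chainCO v u, SMax s v x ∧ ∀ y ∈ chainCO v u, SMax s v y → y ≤ x
  then h.choose else v

/-- The vertices `j` outside `T[v,i]` whose parent lies in `T[v,i]`. -/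
def branchOff (v i : V) : Finset V :=
  univ.filter (fun j => j ∉ chainCC v i ∧ ∃ p ∈ chainCC v i, IsParent p j)

/-- `sum_F(v,i) = Σ F(j)` over `j ∉ T[v,i]` whose parent lies in `T[v,i]`. -/
def sumF (F : V → ℝ) (v i : V) : ℝ := ∑ j ∈ branchOff v i, F j

/-- `cost_F(v,i)`: `sum_F(v,i) + s_i` if `i ∈ win*_v`, and
`sum_F(v,i) + s_{next_v(i)}` otherwise (in particular for `i ∈ win⁻_v`). -/
def costF (w : V → ℝ) (w0 : ℝ) (s : V → ℝ) (F : V → ℝ) (v i : V) : ℝ :=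
  if i ∈ winStar w w0 s v then sumF F v i + s i else sumF F v i + s (nxt s v i)

end

/-!
Since `i ∉ win*_v`, some vertex of `T[v,i)` has `s` at least `s_i`, and `s` is largest on
`T[v,i)` at `x = next_v(i)`: the lowest vertex of a chain where `s` reaches a given level is
s-maximal. So no vertex of `T(x,i)` is s-maximal in `T_x`, whence `next_x(i) = x`, `i ∈ win⁻_x`,
and all four costs carry the same term `s_x`; windows pass to subchains because `w ≥ 0`. What
remains is `sum_F(v,i) + sum_F(x,x) = sum_F(v,x) + sum_F(x,i)`, checked vertex by vertex
according to whether the parent of `j` is `x`, a proper ancestor of `x`, or not an ancestor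
of `x`.
-/

section Tree

variable {V : Type} [PartialOrder V]

lemma IsParent.eq (htree : ∀ a b c : V, a ≤ c → b ≤ c → a ≤ b ∨ b ≤ a)
    {p q j : V} (hp : IsParent p j) (hq : IsParent q j) : p = q := by
  rcases htree p q j hp.1.le hq.1.le with hpq | hqp
  · exact hpq.eq_or_lt.resolve_right fun h => hp.2 ⟨q, h, hq.1⟩
  · exact (hqp.eq_or_lt.resolve_right fun h => hq.2 ⟨p, h, hp.1⟩).symm

variable [Fintype V]

lemma mem_chainCC {v i p : V} : p ∈ chainCC v i ↔ v ≤ p ∧ p ≤ i := by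
  simp [chainCC]

lemma mem_chainCO {v i p : V} : p ∈ chainCO v i ↔ p ≠ i ∧ v ≤ p ∧ p ≤ i := by
  simp [chainCO, mem_chainCC]

lemma mem_branchOff_iff_of_isParent
    (htree : ∀ a b c : V, a ≤ c → b ≤ c → a ≤ b ∨ b ≤ a) {a b p j : V}
    (hpj : IsParent p j) : j ∈ branchOff a b ↔ a ≤ p ∧ p ≤ b ∧ ¬ j ≤ b := by
  simp only [branchOff, mem_filter, mem_univ, true_and, mem_chainCC]
  constructor
  · rintro ⟨hj, q, ⟨haq, hqb⟩, hqj⟩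
    obtain rfl := hqj.eq htree hpj
    exact ⟨haq, hqb, fun hjb => hj ⟨haq.trans hqj.1.le, hjb⟩⟩
  · rintro ⟨hap, hpb, hjb⟩
    exact ⟨fun h => hjb h.2, p, ⟨hap, hpb⟩, hpj⟩

lemma not_mem_branchOff_of_forall_not_isParent {a b j : V} (hj : ∀ p, ¬ IsParent p j) :
    j ∉ branchOff a b := by
  simp only [branchOff, mem_filter, mem_univ, true_and, not_and, not_exists]
  exact fun _ p _ => hj p

lemma branchOff_indicator_add (htree : ∀ a b c : V, a ≤ c → b ≤ c → a ≤ b ∨ b ≤ a)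
    (F : V → ℝ) {v x i : V} (hvx : v ≤ x) (hxi : x ≤ i) (j : V) :
    (if j ∈ branchOff v i then F j else 0) + (if j ∈ branchOff x x then F j else 0)
      = (if j ∈ branchOff v x then F j else 0) + (if j ∈ branchOff x i then F j else 0) := by
  by_cases hj : ∃ p, IsParent p j
  swap
  · simp [not_mem_branchOff_of_forall_not_isParent (not_exists.1 hj)]
  obtain ⟨p, hpj⟩ := hj
  simp only [mem_branchOff_iff_of_isParent htree hpj]
  rcases eq_or_ne p x with rfl | hpx
  · have hjp : ¬ j ≤ p := hpj.1.not_ge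
    simp [hvx, hxi, hjp, add_comm]
  by_cases hpx_le : p ≤ x
  · have hpx' : p < x := lt_of_le_of_ne hpx_le hpx
    have hji : ¬ j ≤ i ↔ ¬ j ≤ x := by
      refine not_congr ⟨fun hji => ?_, fun hjx => hjx.trans hxi⟩
      rcases htree j x i hji hxi with hjx | hxj
      · exact hjx
      · rcases hxj.eq_or_lt with rfl | hxj
        · exact le_rfl
        · exact (hpj.2 ⟨x, hpx', hxj⟩).elim
    simp [hpx'.not_ge, hpx'.le, hpx'.le.trans hxi, hji]
  · by_cases hpi : p ≤ i
    · have hxp : x ≤ p := (htree p x i hpi hxi).resolve_left hpx_le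
      simp [hpx_le, hpi, hxp, hvx.trans hxp]
    · simp [hpx_le, hpi]

lemma sumF_eq_sum_ite (F : V → ℝ) (v i : V) :
    sumF F v i = ∑ j, if j ∈ branchOff v i then F j else 0 := by
  rw [sum_ite_mem, univ_inter, sumF]

lemma sumF_add_sumF (htree : ∀ a b c : V, a ≤ c → b ≤ c → a ≤ b ∨ b ≤ a)
    (F : V → ℝ) {v x i : V} (hvx : v ≤ x) (hxi : x ≤ i) :
    sumF F v i + sumF F x x = sumF F v x + sumF F x i := by
  simp only [sumF_eq_sum_ite, ← sum_add_distrib]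
  exact sum_congr rfl fun j _ => branchOff_indicator_add htree F hvx hxi j

end Tree

section Next

variable {V : Type} [Fintype V] [PartialOrder V] {s : V → ℝ}

lemma smax_self (v : V) : SMax s v v := by
  refine ⟨le_rfl, fun _ hp => ?_⟩
  obtain ⟨hpv, hvp, hpv'⟩ := mem_chainCO.1 hp
  exact absurd (le_antisymm hpv' hvp) hpv

lemma exists_smax_le_of_le {v p : V} (hvp : v ≤ p) : ∃ q ≤ p, SMax s v q ∧ s p ≤ s q := by
  obtain ⟨m, hmp, ⟨hvm, hsm⟩, hmin⟩ :=
    exists_minimal_le_of_wellFoundedLT (fun q => v ≤ q ∧ s p ≤ s q) p ⟨hvp, le_rfl⟩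
  refine ⟨m, hmp, ⟨hvm, fun q hq => ?_⟩, hsm⟩
  obtain ⟨hqm, hvq, hqm'⟩ := mem_chainCO.1 hq
  by_contra! hsq
  exact hqm (le_antisymm hqm' (hmin ⟨hvq, hsm.trans hsq⟩ hqm'))

/-- `IsNext s v u x` says `x = next_v(u)`. -/
def IsNext (s : V → ℝ) (v u x : V) : Prop :=
  x ∈ chainCO v u ∧ SMax s v x ∧ ∀ y ∈ chainCO v u, SMax s v y → y ≤ x

lemma IsNext.nxt_eq {v u x : V} (hx : IsNext s v u x) : nxt s v u = x := by
  have hex : ∃ y, IsNext s v u y := ⟨x, hx⟩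
  obtain ⟨hy, hsy, hymax⟩ := hex.choose_spec
  rw [show nxt s v u = hex.choose from dif_pos hex]
  exact le_antisymm (hx.2.2 _ hy hsy) (hymax x hx.1 hx.2.1)

lemma exists_isNext (htree : ∀ a b c : V, a ≤ c → b ≤ c → a ≤ b ∨ b ≤ a) {v u : V}
    (hvu : v < u) : ∃ x, IsNext s v u x := by
  have hv : v ∈ chainCO v u := mem_chainCO.2 ⟨hvu.ne, le_rfl, hvu.le⟩
  obtain ⟨m, ⟨hm, hsm⟩, hmax⟩ := exists_maximal_of_wellFoundedGT
    (fun y => y ∈ chainCO v u ∧ SMax s v y) ⟨v, hv, smax_self v⟩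
  refine ⟨m, hm, hsm, fun y hy hsy => ?_⟩
  rcases htree y m u (mem_chainCO.1 hy).2.2 (mem_chainCO.1 hm).2.2 with hym | hmy
  · exact hym
  · exact hmax ⟨hy, hsy⟩ hmy

lemma isNext_nxt (htree : ∀ a b c : V, a ≤ c → b ≤ c → a ≤ b ∨ b ≤ a) {v u : V}
    (hvu : v < u) : IsNext s v u (nxt s v u) := by
  obtain ⟨x, hx⟩ := exists_isNext htree hvu
  rwa [hx.nxt_eq]

lemma IsNext.apply_le {v u x : V} (hx : IsNext s v u x) {p : V} (hp : p ∈ chainCO v u) :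
    s p ≤ s x := by
  obtain ⟨hpu, hvp, hpu'⟩ := mem_chainCO.1 hp
  obtain ⟨q, hqp, hsq, hpq⟩ := exists_smax_le_of_le (s := s) hvp
  have hqx : q ≤ x := hx.2.2 q (mem_chainCO.2 ⟨fun h => hpu (le_antisymm hpu' (h ▸ hqp)),
    hsq.1, hqp.trans hpu'⟩) hsq
  rcases hqx.eq_or_lt with rfl | hqx
  · exact hpq
  · exact hpq.trans (hx.2.1.2 q (mem_chainCO.2 ⟨hqx.ne, hsq.1, hqx.le⟩)).le

lemma IsNext.isNext_self {v u x : V} (hx : IsNext s v u x) : IsNext s x u x := by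
  obtain ⟨hxu, hvx, hxu'⟩ := mem_chainCO.1 hx.1
  refine ⟨mem_chainCO.2 ⟨hxu, le_rfl, hxu'⟩, smax_self x, fun y hy hsy => ?_⟩
  obtain ⟨hyu, hxy, hyu'⟩ := mem_chainCO.1 hy
  by_contra hyx
  have hxy : x < y := lt_of_le_of_ne hxy fun h => hyx h.ge
  exact (hsy.2 x (mem_chainCO.2 ⟨hxy.ne, le_rfl, hxy.le⟩)).not_ge
    (hx.apply_le (mem_chainCO.2 ⟨hyu, hvx.trans hxy.le, hyu'⟩))

lemma IsNext.not_smax {v u x : V} (hx : IsNext s v u x) (hu : ¬ SMax s v u) :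
    ¬ SMax s x u := by
  obtain ⟨hxu, hvx, hxu'⟩ := mem_chainCO.1 hx.1
  have ⟨p, hp, hsp⟩ : ∃ p ∈ chainCO v u, s u ≤ s p := by
    by_contra! h
    exact hu ⟨hvx.trans hxu', h⟩
  exact fun h => (h.2 x (mem_chainCO.2 ⟨hxu, le_rfl, hxu'⟩)).not_ge (hsp.trans (hx.apply_le hp))

end Next

section Cost

variable {V : Type} [Fintype V] [PartialOrder V] {w s : V → ℝ} {w0 : ℝ}

lemma mem_win_of_le (hw : ∀ i, 0 ≤ w i) {v a b i : V} (hi : i ∈ win w w0 v)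
    (hva : v ≤ a) (hab : a ≤ b) (hbi : b ≤ i) : b ∈ win w w0 a := by
  obtain ⟨-, -, hsum⟩ := mem_filter.1 hi
  have hsub : chainCC a b ⊆ chainCC v i := fun p hp =>
    mem_chainCC.2 ⟨hva.trans (mem_chainCC.1 hp).1, (mem_chainCC.1 hp).2.trans hbi⟩
  have hsum' := (sum_le_sum_of_subset_of_nonneg hsub fun j _ _ => hw j).trans hsum
  exact mem_filter.2 ⟨mem_univ _, hab, hsum'⟩

lemma costF_of_mem_winStar (F : V → ℝ) {v i : V} (hi : i ∈ winStar w w0 s v) :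
    costF w w0 s F v i = sumF F v i + s i :=
  if_pos hi

lemma costF_of_mem_winMinus (F : V → ℝ) {v i : V} (hi : i ∈ winMinus w w0 s v) :
    costF w w0 s F v i = sumF F v i + s (nxt s v i) :=
  if_neg (mem_sdiff.1 hi).2

end Cost

theorem stmt_1_general (V : Type) [Fintype V] [PartialOrder V]
    (htree : ∀ a b c : V, a ≤ c → b ≤ c → a ≤ b ∨ b ≤ a)
    (w : V → ℝ) (s : V → ℝ) (w0 : ℝ)
    (hw : ∀ i : V, 0 ≤ w i)
    (v i : V) (hi : i ∈ winMinus w w0 s v)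
    (x : V) (hx : x = nxt s v i)
    (F : V → ℝ) :
    x ∈ winStar w w0 s v ∧ x ∈ winStar w w0 s x ∧
    i ∈ winMinus w w0 s x ∧ nxt s x i = x ∧
    costF w w0 s F v i - costF w w0 s F x i
      = costF w w0 s F v x - costF w w0 s F x x := by
  obtain ⟨hiwin, hiStar⟩ := mem_sdiff.1 hi
  have hvi : v ≤ i := (mem_filter.1 hiwin).2.1
  have hsi : ¬ SMax s v i := fun h => hiStar (mem_filter.2 ⟨hiwin, h⟩)
  have hnext : IsNext s v i x :=
    hx ▸ isNext_nxt htree (lt_of_le_of_ne hvi fun h => hsi (h ▸ smax_self v))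
  obtain ⟨hxi, hvx, hxi'⟩ := mem_chainCO.1 hnext.1
  have hxv : x ∈ winStar w w0 s v :=
    mem_filter.2 ⟨mem_win_of_le hw hiwin le_rfl hvx hxi', hnext.2.1⟩
  have hxx : x ∈ winStar w w0 s x :=
    mem_filter.2 ⟨mem_win_of_le hw hiwin hvx le_rfl hxi', smax_self x⟩
  have hix : i ∈ winMinus w w0 s x := mem_sdiff.2
    ⟨mem_win_of_le hw hiwin hvx hxi' le_rfl, fun h => hnext.not_smax hsi (mem_filter.1 h).2⟩
  have hnxt : nxt s x i = x := hnext.isNext_self.nxt_eq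
  refine ⟨hxv, hxx, hix, hnxt, ?_⟩
  rw [costF_of_mem_winMinus F hi, costF_of_mem_winMinus F hix, costF_of_mem_winStar F hxv,
    costF_of_mem_winStar F hxx, ← hx, hnxt]
  linarith [sumF_add_sumF htree F hvx hxi']

theorem stmt_1 (V : Type) [Fintype V] [Nonempty V] [PartialOrder V]
    (htree : ∀ a b c : V, a ≤ c → b ≤ c → a ≤ b ∨ b ≤ a)
    (w : V → ℝ) (s : V → ℝ) (w0 : ℝ)
    (hw : ∀ i : V, 0 ≤ w i) (hw0 : 0 ≤ w0)
    (v i : V) (hi : i ∈ winMinus w w0 s v)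
    (x : V) (hx : x = nxt s v i)
    (F : V → ℝ) :
    x ∈ winStar w w0 s v ∧ x ∈ winStar w w0 s x ∧
    i ∈ winMinus w w0 s x ∧ nxt s x i = x ∧
    costF w w0 s F v i - costF w w0 s F x i
      = costF w w0 s F v x - costF w w0 s F x x :=
  stmt_1_general V htree w s w0 hw v i hi x hx F
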